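/- (Touchard's congruence) For any prime p and any nonnegative integer n, B_{p+n} ≡ B_n + B_{n+1} (mod p). -/

import Mathlib

/-!
Let `L` be the linear functional on polynomials with `L (X ^ k) = B_k`. The Bell recursion says
exactly that `L (X * f) = L (f (X + 1))`; iterating along the falling factorial
`(X)_k = X (X - 1) ⋯ (X - k + 1)` gives `L ((X)_k * f) = L (f (X + k))`. Modulo `p` the falling
factorial `(X)_p` is `X ^ p - X` and the shift by `p` is trivial, so
`B_{p+n} = L ((X ^ p - X) * X ^ n) + L (X ^ (n + 1)) = B_n + B_{n+1}`.
-/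

/-- The Bell numbers: `bell n` is the number of partitions of an `n`-element set,
determined by `bell 0 = 1` and `bell (n+1) = ∑_{k=0}^{n} C(n,k) * bell k`. -/
def bell : ℕ → ℕ
  | 0 => 1
  | n + 1 => ∑ k ∈ (Finset.range (n + 1)).attach, n.choose k * bell k
decreasing_by exact Finset.mem_range.mp k.2

open Finset Polynomial

theorem bell_succ (n : ℕ) : bell (n + 1) = ∑ k ∈ range (n + 1), n.choose k * bell k := by
  rw [bell, sum_attach (range (n + 1)) fun k => n.choose k * bell k]

theorem descPochhammer_eq_prod_range (R : Type*) [CommRing R] (n : ℕ) :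
    descPochhammer R n = ∏ i ∈ range n, (X - (i : R[X])) := by
  induction n with
  | zero => simp
  | succ n ih => rw [descPochhammer_succ_right, ih, prod_range_succ]

theorem ZMod.prod_univ_eq_prod_range {M : Type*} [CommMonoid M] (n : ℕ) [NeZero n]
    (f : ZMod n → M) : ∏ a, f a = ∏ i ∈ range n, f i :=
  prod_nbij' ZMod.val Nat.cast (fun a _ => mem_range.2 a.val_lt) (fun _ _ => mem_univ _)
    (fun a _ => ZMod.natCast_zmod_val a) (fun _ hi => ZMod.val_natCast_of_lt (mem_range.1 hi))
    (fun a _ => by rw [ZMod.natCast_zmod_val])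

theorem FiniteField.X_pow_card_sub_X_eq_prod (K : Type*) [Field K] [Fintype K] :
    (X ^ Fintype.card K - X : K[X]) = ∏ a, (X - C a) := by
  have hq : 1 < Fintype.card K := Fintype.one_lt_card
  have hmonic : (X ^ Fintype.card K - X : K[X]).Monic :=
    monic_X_pow_sub (by rw [degree_X]; exact_mod_cast hq)
  have hroots := prod_multiset_X_sub_C_of_monic_of_roots_card_eq hmonic
    (by rw [roots_X_pow_card_sub_X, X_pow_card_sub_X_natDegree_eq K hq]; rfl)
  rw [← hroots, roots_X_pow_card_sub_X, prod_eq_multiset_prod]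

theorem ZMod.descPochhammer_eq_X_pow_sub_X (p : ℕ) [Fact p.Prime] :
    descPochhammer (ZMod p) p = X ^ p - X := by
  have h := FiniteField.X_pow_card_sub_X_eq_prod (ZMod p)
  rw [ZMod.card, ZMod.prod_univ_eq_prod_range] at h
  rw [descPochhammer_eq_prod_range, h]
  simp only [map_natCast]

section BellFunctional

variable (R : Type*)

noncomputable def bellFunctional [CommSemiring R] : R[X] →ₗ[R] R :=
  lsum fun k => LinearMap.toSpanSingleton R R (bell k)

variable {R}

section CommSemiring

variable [CommSemiring R]

theorem bellFunctional_X_pow (n : ℕ) : bellFunctional R (X ^ n) = bell n := by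
  simp [bellFunctional, lsum_apply, ← monomial_one_right_eq_X_pow]

theorem bellFunctional_C_mul (c : R) (f : R[X]) :
    bellFunctional R (C c * f) = c * bellFunctional R f := by
  rw [C_mul', map_smul, smul_eq_mul]

theorem bellFunctional_X_add_one_pow (n : ℕ) :
    bellFunctional R ((X + 1) ^ n) = bell (n + 1) := by
  rw [add_pow, map_sum, bell_succ]
  push_cast
  refine sum_congr rfl fun k _ => ?_
  rw [one_pow, mul_one, ← C_eq_natCast, mul_comm, bellFunctional_C_mul, bellFunctional_X_pow]

theorem bellFunctional_X_mul (f : R[X]) :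
    bellFunctional R (X * f) = bellFunctional R (f.comp (X + 1)) := by
  induction f using Polynomial.induction_on' with
  | add f g hf hg => simp only [mul_add, map_add, add_comp, hf, hg]
  | monomial n c =>
    rw [← C_mul_X_pow_eq_monomial, mul_left_comm, ← pow_succ', C_mul_comp, X_pow_comp,
      bellFunctional_C_mul, bellFunctional_C_mul, bellFunctional_X_pow,
      bellFunctional_X_add_one_pow]

end CommSemiring

theorem bellFunctional_descPochhammer_mul [CommRing R] (k : ℕ) (f : R[X]) :
    bellFunctional R (descPochhammer R k * f) = bellFunctional R (f.comp (X + (k : R[X]))) := by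
  induction k generalizing f with
  | zero => simp
  | succ k ih =>
    have hunshift : ((X : R[X]) - 1).comp (X + 1) = X := by
      rw [sub_comp, X_comp, one_comp, add_sub_cancel_right]
    have hshift : ((X : R[X]) + 1).comp (X + (k : R[X])) = X + ((k + 1 : ℕ) : R[X]) := by
      rw [add_comp, X_comp, one_comp, Nat.cast_succ, add_assoc]
    rw [descPochhammer_succ_left, mul_assoc, bellFunctional_X_mul, mul_comp, comp_assoc,
      hunshift, comp_X, ih, comp_assoc, hshift]

end BellFunctional

/-- Touchard's congruence: `B_{p+n} ≡ B_n + B_{n+1} (mod p)` for every prime `p`. -/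
theorem touchard_congruence (p : ℕ) (hp : p.Prime) (n : ℕ) :
    (bell (p + n) : ZMod p) = (bell n : ZMod p) + (bell (n + 1) : ZMod p) := by
  have := Fact.mk hp
  let L := bellFunctional (ZMod p)
  calc (bell (p + n) : ZMod p) = L ((descPochhammer (ZMod p) p + X) * X ^ n) := by
        rw [ZMod.descPochhammer_eq_X_pow_sub_X, sub_add_cancel, ← pow_add, bellFunctional_X_pow]
    _ = L ((X ^ n).comp (X + (p : (ZMod p)[X]))) + L (X ^ (n + 1)) := by
        rw [add_mul, map_add, bellFunctional_descPochhammer_mul, pow_succ']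
    _ = bell n + bell (n + 1) := by
        rw [CharP.cast_eq_zero, add_zero, comp_X, bellFunctional_X_pow, bellFunctional_X_pow]
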